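/- arXiv:2505.02386 — 3 statements merged into one kernel-verified Lean document; each statement's English description precedes it below -/
import Mathlib

section
/- Let Σ_{g1} and Σ_{g2} be closed orientable surfaces of genus g1 and g2 with g1, g2 > 1. Then every continuous map f : Σ_{g1} → Σ_{g2} satisfies |deg f| ≤ (g1 - 1)/(g2 - 1). -/
open scoped BigOperators

noncomputable section

/-- Singular `n`-simplices of `X`: continuous maps from the standard `n`-simplex. -/
abbrev SingularSimplex (n : ℕ) (X : Type) [TopologicalSpace X] :=
  C(↥(stdSimplex ℝ (Fin (n + 1))), X)

/-- Real singular `n`-chains: finite formal `ℝ`-linear combinations of singular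
`n`-simplices. -/
abbrev SingularChain (n : ℕ) (X : Type) [TopologicalSpace X] :=
  SingularSimplex n X →₀ ℝ

/-- The `ℓ¹`-norm `|c|₁ = ∑ |a_j|` of a singular chain `c = ∑ a_j σ_j`. -/
def chainL1 {n : ℕ} {X : Type} [TopologicalSpace X] (c : SingularChain n X) : ℝ :=
  ∑ σ ∈ c.support, |c σ|

/-- The `i`-th face inclusion of the standard `n`-simplex into the standard
`(n+1)`-simplex (insert the barycentric coordinate `0` in position `i`). -/
def faceMap (n : ℕ) (i : Fin (n + 2)) :
    C(↥(stdSimplex ℝ (Fin (n + 1))), ↥(stdSimplex ℝ (Fin (n + 2)))) :=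
  ⟨fun x => ⟨(i.insertNth (0 : ℝ) x.1 : Fin (n + 2) → ℝ), by
      obtain ⟨x, hx⟩ := x
      refine ⟨fun j => ?_, ?_⟩
      · exact i.succAboveCases (by simp) (fun j => by simpa using hx.1 j) j
      · rw [Fin.sum_univ_succAbove _ i]
        simpa using hx.2⟩,
    by
      have h1 : Continuous fun y : Fin (n + 1) → ℝ =>
          (i.insertNth (0 : ℝ) y : Fin (n + 2) → ℝ) :=
        Continuous.finInsertNth i continuous_const continuous_id
      have h : Continuous fun x : ↥(stdSimplex ℝ (Fin (n + 1))) =>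
          (i.insertNth (0 : ℝ) x.1 : Fin (n + 2) → ℝ) :=
        h1.comp continuous_subtype_val
      exact h.subtype_mk _⟩

/-- The singular boundary operator `∂ : C_{n+1}(X;ℝ) → C_n(X;ℝ)`,
`∂σ = ∑ᵢ (-1)ⁱ σ ∘ δᵢ`. -/
def boundary (n : ℕ) (X : Type) [TopologicalSpace X]
    (c : SingularChain (n + 1) X) : SingularChain n X :=
  c.sum fun σ r => ∑ i : Fin (n + 2),
    ((-1 : ℝ) ^ (i : ℕ) * r) • Finsupp.single (σ.comp (faceMap n i)) (1 : ℝ)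

/-- The pushforward (chain map) `f_#` of singular chains along a continuous map. -/
def pushforward {n : ℕ} {X Y : Type} [TopologicalSpace X] [TopologicalSpace Y]
    (f : C(X, Y)) (c : SingularChain n X) : SingularChain n Y :=
  Finsupp.mapDomain (fun σ => f.comp σ) c

/-- `F` is the (nonempty) set of real singular `n`-cycles representing a fixed
homology class of `X` — e.g. the fundamental class `[X]` of an oriented closed
connected `n`-manifold `X`.  It consists of cycles, and two of its members differ
exactly by a boundary. -/
def IsFundamentalClass (n : ℕ) (X : Type) [TopologicalSpace X]
    (F : Set (SingularChain n X)) : Prop :=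
  F.Nonempty ∧
  (∀ c ∈ F, ∀ m (h : n = m + 1), boundary m X (h ▸ c) = 0) ∧
  (∀ c ∈ F, ∀ c', c' ∈ F ↔ ∃ b, c' = c + boundary n X b)

/-- The simplicial volume (Gromov norm) associated with the class `F`:
`inf { |c|₁ : c ∈ F }`. -/
def simplicialVolume {n : ℕ} {X : Type} [TopologicalSpace X]
    (F : Set (SingularChain n X)) : ℝ :=
  sInf (chainL1 '' F)

/-- `f` has degree `d` with respect to the classes `FX`, `FY`:
`f_*[X] = d·[Y]`, i.e. the pushforward of any representative of `[X]` is
homologous to `d` times a representative of `[Y]`. -/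
def HasDegree {n : ℕ} {X Y : Type} [TopologicalSpace X] [TopologicalSpace Y]
    (f : C(X, Y)) (FX : Set (SingularChain n X)) (FY : Set (SingularChain n Y))
    (d : ℤ) : Prop :=
  ∀ c ∈ FX, ∃ c' ∈ FY, ∃ b, pushforward f c = (d : ℝ) • c' + boundary n Y b

/-! Gromov's inequality `|deg f| · ‖N‖ ≤ ‖M‖` holds at the chain level: the pushforward `f_#`
does not increase the `ℓ¹`-norm, and for `d ≠ 0` the chain `d⁻¹ • f_# c` represents `[N]`
whenever `c` represents `[M]`. With `‖Σ_g‖ = 4g - 4` and `4g₂ - 4 > 0` the bound follows by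
dividing. -/

section ChainL1

variable {n : ℕ} {X Y : Type} [TopologicalSpace X] [TopologicalSpace Y]

lemma chainL1_nonneg (c : SingularChain n X) : 0 ≤ chainL1 c :=
  Finset.sum_nonneg fun _ _ => abs_nonneg _

lemma chainL1_eq_sum_of_support_subset (c : SingularChain n X)
    {s : Finset (SingularSimplex n X)} (hs : c.support ⊆ s) :
    chainL1 c = ∑ σ ∈ s, |c σ| :=
  Finset.sum_subset hs fun σ _ hσ => by simp [Finsupp.notMem_support_iff.mp hσ]

lemma chainL1_zero : chainL1 (0 : SingularChain n X) = 0 := by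
  simp [chainL1]

lemma chainL1_add_le (a b : SingularChain n X) :
    chainL1 (a + b) ≤ chainL1 a + chainL1 b := by
  classical
  rw [chainL1_eq_sum_of_support_subset (a + b) Finsupp.support_add,
    chainL1_eq_sum_of_support_subset a Finset.subset_union_left,
    chainL1_eq_sum_of_support_subset b Finset.subset_union_right,
    ← Finset.sum_add_distrib]
  exact Finset.sum_le_sum fun σ _ => by simpa using abs_add_le (a σ) (b σ)

lemma chainL1_sum_le {ι : Type*} (s : Finset ι) (c : ι → SingularChain n X) :
    chainL1 (∑ i ∈ s, c i) ≤ ∑ i ∈ s, chainL1 (c i) :=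
  Finset.le_sum_of_subadditive _ chainL1_zero.le chainL1_add_le s c

lemma chainL1_smul (r : ℝ) (c : SingularChain n X) :
    chainL1 (r • c) = |r| * chainL1 c := by
  rw [chainL1_eq_sum_of_support_subset (r • c) Finsupp.support_smul, chainL1, Finset.mul_sum]
  simp [abs_mul]

lemma chainL1_single_le (σ : SingularSimplex n X) (r : ℝ) :
    chainL1 (Finsupp.single σ r) ≤ |r| := by
  rw [chainL1_eq_sum_of_support_subset _ Finsupp.support_single_subset]
  simp

lemma chainL1_pushforward_le (f : C(X, Y)) (c : SingularChain n X) :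
    chainL1 (pushforward f c) ≤ chainL1 c :=
  (chainL1_sum_le _ _).trans <| Finset.sum_le_sum fun _ _ => chainL1_single_le _ _

end ChainL1

lemma boundary_smul {n : ℕ} {X : Type} [TopologicalSpace X] (r : ℝ)
    (b : SingularChain (n + 1) X) :
    boundary n X (r • b) = r • boundary n X b := by
  unfold boundary
  rw [Finsupp.sum_smul_index' (by simp), Finsupp.smul_sum]
  refine Finset.sum_congr rfl fun σ _ => ?_
  simp only [smul_eq_mul, Finset.smul_sum, smul_smul]
  exact Finset.sum_congr rfl fun i _ => by ring_nf

section SimplicialVolume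

variable {n : ℕ} {X Y : Type} [TopologicalSpace X] [TopologicalSpace Y]

lemma simplicialVolume_nonneg (F : Set (SingularChain n X)) : 0 ≤ simplicialVolume F :=
  Real.sInf_nonneg <| by
    rintro _ ⟨c, -, rfl⟩
    exact chainL1_nonneg c

lemma simplicialVolume_le_chainL1 {F : Set (SingularChain n X)} {c : SingularChain n X}
    (hc : c ∈ F) : simplicialVolume F ≤ chainL1 c :=
  csInf_le ⟨0, by rintro _ ⟨c, -, rfl⟩; exact chainL1_nonneg c⟩ ⟨c, hc, rfl⟩

lemma HasDegree.inv_smul_pushforward_mem {f : C(X, Y)} {FX : Set (SingularChain n X)}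
    {FY : Set (SingularChain n Y)} {d : ℤ} (hf : HasDegree f FX FY d)
    (hFY : IsFundamentalClass n Y FY) (hd : d ≠ 0) {c : SingularChain n X} (hc : c ∈ FX) :
    (d : ℝ)⁻¹ • pushforward f c ∈ FY := by
  obtain ⟨c', hc', b, hb⟩ := hf c hc
  refine (hFY.2.2 c' hc' _).mpr ⟨(d : ℝ)⁻¹ • b, ?_⟩
  rw [hb, smul_add, smul_smul, inv_mul_cancel₀ (Int.cast_ne_zero.mpr hd), one_smul,
    boundary_smul]

theorem HasDegree.abs_mul_simplicialVolume_le {f : C(X, Y)} {FX : Set (SingularChain n X)}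
    {FY : Set (SingularChain n Y)} {d : ℤ} (hf : HasDegree f FX FY d)
    (hFX : IsFundamentalClass n X FX) (hFY : IsFundamentalClass n Y FY) :
    |(d : ℝ)| * simplicialVolume FY ≤ simplicialVolume FX := by
  rcases eq_or_ne d 0 with rfl | hd
  · simpa using simplicialVolume_nonneg FX
  refine le_csInf (hFX.1.image _) ?_
  rintro _ ⟨c, hc, rfl⟩
  calc |(d : ℝ)| * simplicialVolume FY
      ≤ |(d : ℝ)| * chainL1 ((d : ℝ)⁻¹ • pushforward f c) :=
        mul_le_mul_of_nonneg_left
          (simplicialVolume_le_chainL1 (hf.inv_smul_pushforward_mem hFY hd hc)) (abs_nonneg _)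
    _ = chainL1 (pushforward f c) := by
        rw [chainL1_smul, abs_inv, ← mul_assoc,
          mul_inv_cancel₀ (abs_ne_zero.mpr (Int.cast_ne_zero.mpr hd)), one_mul]
    _ ≤ chainL1 c := chainL1_pushforward_le f c

end SimplicialVolume

theorem stmt5_general (g1 g2 : ℕ) (hg2 : 1 < g2)
    (M N : Type) [TopologicalSpace M] [TopologicalSpace N]
    (FM : Set (SingularChain 2 M)) (FN : Set (SingularChain 2 N))
    (hFM : IsFundamentalClass 2 M FM) (hFN : IsFundamentalClass 2 N FN)
    (hvolM : simplicialVolume FM = 4 * (g1 : ℝ) - 4)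
    (hvolN : simplicialVolume FN = 4 * (g2 : ℝ) - 4)
    (f : C(M, N)) (d : ℤ) (hdeg : HasDegree f FM FN d) :
    |(d : ℝ)| ≤ ((g1 : ℝ) - 1) / ((g2 : ℝ) - 1) := by
  have hg2' : (0 : ℝ) < (g2 : ℝ) - 1 := by
    have : (1 : ℝ) < g2 := by exact_mod_cast hg2
    linarith
  have gromov := hdeg.abs_mul_simplicialVolume_le hFM hFN
  rw [hvolM, hvolN] at gromov
  rw [le_div_iff₀ hg2']
  linarith

/-- Let `Σ_{g1}`, `Σ_{g2}` be closed orientable surfaces of genus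
`g1, g2 > 1` (encoded via their fundamental classes and the computation
`‖Σ_g‖ = 4g - 4` of the simplicial volume).  Every continuous map
`f : Σ_{g1} → Σ_{g2}` satisfies `|deg f| ≤ (g1 - 1)/(g2 - 1)`. -/
theorem stmt5 (g1 g2 : ℕ) (hg1 : 1 < g1) (hg2 : 1 < g2)
    (M N : Type) [TopologicalSpace M] [TopologicalSpace N]
    (FM : Set (SingularChain 2 M)) (FN : Set (SingularChain 2 N))
    (hFM : IsFundamentalClass 2 M FM) (hFN : IsFundamentalClass 2 N FN)
    (hvolM : simplicialVolume FM = 4 * (g1 : ℝ) - 4)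
    (hvolN : simplicialVolume FN = 4 * (g2 : ℝ) - 4)
    (f : C(M, N)) (d : ℤ) (hdeg : HasDegree f FM FN d) :
    |(d : ℝ)| ≤ ((g1 : ℝ) - 1) / ((g2 : ℝ) - 1) :=
  stmt5_general g1 g2 hg2 M N FM FN hFM hFN hvolM hvolN f d hdeg

end
end

section
/- Every simplicial automorphism of the 7-vertex triangulation of the torus preserves orientation; consequently no simplicial isomorphism from this complex to itself has degree -1. -/
/-- The facets of the `7`-vertex triangulation of the torus, on the vertex set
`{1,…,7}` realized inside `Fin 7` (so the label `7` is the element `0`):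
`124, 245, 235, 356, 156, 126, 267, 237, 137, 157, 457, 467, 346, 134`. -/
def torusFacets : Finset (Finset (Fin 7)) :=
  {{1,2,4},{2,4,5},{2,3,5},{3,5,6},{1,5,6},{1,2,6},{2,6,7},{2,3,7},{1,3,7},
   {1,5,7},{4,5,7},{4,6,7},{3,4,6},{1,3,4}}

/-- The edges of the `7`-vertex torus. -/
def torusEdges : Finset (Finset (Fin 7)) :=
  torusFacets.biUnion fun t => Finset.powersetCard 2 t

/-- The coherent orientation of the `7`-vertex torus in which `[1,2,4]` is
positively oriented: each facet appears as an ordered triple, and the set of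
oriented facets is closed under cyclic rotation. -/
def torusPos : Finset (Fin 7 × Fin 7 × Fin 7) :=
  {(1,2,4), (2,3,5), (3,4,6), (4,5,7), (5,6,1), (6,7,2), (7,1,3),
   (1,4,3), (2,5,4), (3,6,5), (4,7,6), (5,1,7), (6,2,1), (7,3,2)}

/-- All oriented facets (the `42` cyclic rotations of the positive triples). -/
def torusF : Finset (Fin 7 × Fin 7 × Fin 7) :=
  torusPos ∪ torusPos.image (fun x => (x.2.1, x.2.2, x.1)) ∪
    torusPos.image (fun x => (x.2.2, x.1, x.2.1))

set_option maxHeartbeats 4000000 in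
set_option maxRecDepth 10000 in
set_option synthInstance.maxSize 2000 in
set_option synthInstance.maxHeartbeats 2000000 in
lemma torus_key : ∀ v1 v2 v4 : Fin 7, ({v1,v2,v4} : Finset (Fin 7)) ∈ torusFacets →
    ∀ v5 : Fin 7, ({v2,v4,v5} : Finset (Fin 7)) ∈ torusFacets →
    ∀ v6 : Fin 7, ({v1,v5,v6} : Finset (Fin 7)) ∈ torusFacets →
    ∀ v3 : Fin 7, ({v1,v3,v4} : Finset (Fin 7)) ∈ torusFacets →
    ∀ v7 : Fin 7, ({v2,v6,v7} : Finset (Fin 7)) ∈ torusFacets →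
    ({v2,v3,v5} : Finset (Fin 7)) ∈ torusFacets →
    ({v3,v5,v6} : Finset (Fin 7)) ∈ torusFacets →
    ({v1,v2,v6} : Finset (Fin 7)) ∈ torusFacets →
    ({v2,v3,v7} : Finset (Fin 7)) ∈ torusFacets →
    ({v1,v3,v7} : Finset (Fin 7)) ∈ torusFacets →
    ({v1,v5,v7} : Finset (Fin 7)) ∈ torusFacets →
    ({v4,v5,v7} : Finset (Fin 7)) ∈ torusFacets →
    ({v4,v6,v7} : Finset (Fin 7)) ∈ torusFacets →
    ({v3,v4,v6} : Finset (Fin 7)) ∈ torusFacets →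
    ((∀ p ∈ torusF, (![v7,v1,v2,v3,v4,v5,v6] p.1, ![v7,v1,v2,v3,v4,v5,v6] p.2.1,
        ![v7,v1,v2,v3,v4,v5,v6] p.2.2) ∈ torusF) ∧ (v1, v4, v2) ∉ torusF) := by decide

/-- Every simplicial automorphism of the `7`-vertex torus (a
permutation of the vertices carrying facets to facets) preserves the orientation;
consequently no simplicial isomorphism of this complex to itself has degree `-1`
(i.e. none carries every positively oriented facet to a negatively oriented
one). -/
theorem stmt9 (σ : Equiv.Perm (Fin 7))
    (hσ : ∀ t ∈ torusFacets, t.image σ ∈ torusFacets) :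
    (∀ a b c, (a, b, c) ∈ torusF → (σ a, σ b, σ c) ∈ torusF) ∧
    ¬ (∀ a b c, (a, b, c) ∈ torusF → (σ a, σ c, σ b) ∈ torusF) := by
  have him : ∀ (a b c : Fin 7), ({a,b,c} : Finset (Fin 7)) ∈ torusFacets →
      ({σ a, σ b, σ c} : Finset (Fin 7)) ∈ torusFacets := by
    intro a b c h
    have := hσ _ h
    simpa [Finset.image_insert] using this
  have key := torus_key (σ 1) (σ 2) (σ 4) (him 1 2 4 (by decide))
    (σ 5) (him 2 4 5 (by decide)) (σ 6) (him 1 5 6 (by decide))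
    (σ 3) (him 1 3 4 (by decide)) (σ 0) (him 2 6 0 (by decide))
    (him 2 3 5 (by decide)) (him 3 5 6 (by decide)) (him 1 2 6 (by decide))
    (him 2 3 0 (by decide)) (him 1 3 0 (by decide)) (him 1 5 0 (by decide))
    (him 4 5 0 (by decide)) (him 4 6 0 (by decide)) (him 3 4 6 (by decide))
  have hm : ∀ x : Fin 7, σ x = ![σ 0, σ 1, σ 2, σ 3, σ 4, σ 5, σ 6] x := by
    intro x; fin_cases x <;> rfl
  constructor
  · intro a b c h
    have := key.1 (a, b, c) h
    rwa [← hm, ← hm, ← hm] at this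
  · intro h
    have h124 : ((1 : Fin 7), (2 : Fin 7), (4 : Fin 7)) ∈ torusF := by decide
    exact key.2 (h 1 2 4 h124)
end

section
/- The automorphism group of the 7-vertex triangulation of the torus has order 42. -/
/-- The facets as ordered triples, for fast Boolean membership testing. -/
def facetList : List (Fin 7 × Fin 7 × Fin 7) :=
  [(1,2,4),(2,4,5),(2,3,5),(3,5,6),(1,5,6),(1,2,6),(2,6,0),(2,3,0),(1,3,0),
   (1,5,0),(4,5,0),(4,6,0),(3,4,6),(1,3,4)]

/-- Boolean test: is `{x,y,z}` a facet? -/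
def memB (x y z : Fin 7) : Bool :=
  facetList.any fun p =>
    (x = p.1 && y = p.2.1 && z = p.2.2) || (x = p.1 && y = p.2.2 && z = p.2.1) ||
    (x = p.2.1 && y = p.1 && z = p.2.2) || (x = p.2.1 && y = p.2.2 && z = p.1) ||
    (x = p.2.2 && y = p.1 && z = p.2.1) || (x = p.2.2 && y = p.2.1 && z = p.1)

set_option maxRecDepth 40000 in
lemma memB_iff : ∀ x y z : Fin 7,
    ({x,y,z} : Finset (Fin 7)) ∈ torusFacets ↔ memB x y z := by decide

set_option maxRecDepth 100000 in
lemma keyB : ∀ a b c d e : Fin 7,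
    (memB 1 2 c && memB 1 b c && memB 2 c d && memB 1 d e && memB b d e &&
     memB 2 e a && memB 1 d a && memB 1 b a) = true →
    (a, b, c, d, e) = ((0 : Fin 7), 3, 4, 5, 6) := by decide

/-- The affine map sending `1 ↦ u`, `2 ↦ v`. -/
def affMap (u v : Fin 7) : Fin 7 → Fin 7 := fun x => (v - u) * x + (2 * u - v)

set_option maxRecDepth 40000 in
lemma aff_bij : ∀ u v : Fin 7, u ≠ v → Function.Bijective (affMap u v) := by decide

lemma aff_vals : ∀ u v : Fin 7, affMap u v 1 = u ∧ affMap u v 2 = v := by decide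

set_option maxRecDepth 100000 in
lemma aff_pres : ∀ u v : Fin 7, u ≠ v →
    ∀ t ∈ torusFacets, t.image (affMap u v) ∈ torusFacets := by decide

lemma inv_mem {σ : Equiv.Perm (Fin 7)}
    (h : ∀ t ∈ torusFacets, t.image ⇑σ ∈ torusFacets) :
    ∀ t ∈ torusFacets, t.image ⇑σ.symm ∈ torusFacets := by
  have hsurj := Finset.surj_on_of_inj_on_of_card_le (s := torusFacets) (t := torusFacets)
    (f := fun t _ => t.image ⇑σ) (fun t ht => h t ht)
    (fun t₁ t₂ h₁ h₂ e => Finset.image_injective σ.injective e) le_rfl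
  intro t ht
  obtain ⟨s, hs, hst⟩ := hsurj t ht
  have hsymm : t.image ⇑σ.symm = s := by
    rw [hst, Finset.image_image]
    simp
  rw [hsymm]; exact hs

lemma fixer_id {ρ : Equiv.Perm (Fin 7)}
    (h : ∀ t ∈ torusFacets, t.image ⇑ρ ∈ torusFacets)
    (h1 : ρ 1 = 1) (h2 : ρ 2 = 2) : ∀ x, ρ x = x := by
  have himg : ∀ x y z : Fin 7, ({x,y,z} : Finset (Fin 7)) ∈ torusFacets →
      memB (ρ x) (ρ y) (ρ z) = true := by
    intro x y z hxyz
    have := h _ hxyz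
    rw [Finset.image_insert, Finset.image_insert, Finset.image_singleton] at this
    exact (memB_iff _ _ _).mp this
  have m1 : memB (ρ 1) (ρ 2) (ρ 4) = true := himg 1 2 4 (by decide)
  have m2 : memB (ρ 1) (ρ 3) (ρ 4) = true := himg 1 3 4 (by decide)
  have m3 : memB (ρ 2) (ρ 4) (ρ 5) = true := himg 2 4 5 (by decide)
  have m4 : memB (ρ 1) (ρ 5) (ρ 6) = true := himg 1 5 6 (by decide)
  have m5 : memB (ρ 3) (ρ 5) (ρ 6) = true := himg 3 5 6 (by decide)
  have m6 : memB (ρ 2) (ρ 6) (ρ 0) = true := himg 2 6 0 (by decide)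
  have m7 : memB (ρ 1) (ρ 5) (ρ 0) = true := himg 1 5 0 (by decide)
  have m8 : memB (ρ 1) (ρ 3) (ρ 0) = true := himg 1 3 0 (by decide)
  rw [h1] at m1 m2 m4 m7 m8
  rw [h2] at m1 m3 m6
  have := keyB (ρ 0) (ρ 3) (ρ 4) (ρ 5) (ρ 6)
    (by rw [m1, m2, m3, m4, m5, m6, m7, m8]; rfl)
  simp only [Prod.mk.injEq] at this
  obtain ⟨e0, e3, e4, e5, e6⟩ := this
  intro x
  fin_cases x <;> simp_all

/-- The automorphism group of the `7`-vertex triangulation of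
the torus — the permutations of the vertex set carrying facets to facets — has
order `42`. -/
theorem stmt10 :
    (Finset.univ.filter fun σ : Equiv.Perm (Fin 7) =>
      ∀ t ∈ torusFacets, t.image σ ∈ torusFacets).card = 42 := by
  have hT : ((Finset.univ : Finset (Fin 7 × Fin 7)).filter fun p => p.1 ≠ p.2).card = 42 := by
    decide
  rw [← hT]
  apply Finset.card_bij (fun σ _ => (σ 1, σ 2))
  · intro σ hσ
    simp only [Finset.mem_filter, Finset.mem_univ, true_and]
    exact σ.injective.ne (by decide)
  · intro σ hσ τ hτ hst
    simp only [Prod.mk.injEq] at hst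
    obtain ⟨hs1, hs2⟩ := hst
    rw [Finset.mem_filter] at hσ hτ
    set ρ : Equiv.Perm (Fin 7) := σ.trans τ.symm with hρ
    have hρmem : ∀ t ∈ torusFacets, t.image ⇑ρ ∈ torusFacets := by
      intro t ht
      have : t.image ⇑ρ = (t.image ⇑σ).image ⇑τ.symm := by
        rw [Finset.image_image]; rfl
      rw [this]
      exact inv_mem hτ.2 _ (hσ.2 t ht)
    have hρ1 : ρ 1 = 1 := by
      simp only [hρ, Equiv.trans_apply, hs1, Equiv.symm_apply_apply]
    have hρ2 : ρ 2 = 2 := by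
      simp only [hρ, Equiv.trans_apply, hs2, Equiv.symm_apply_apply]
    have hall := fixer_id hρmem hρ1 hρ2
    apply Equiv.ext
    intro x
    have := hall x
    simp only [hρ, Equiv.trans_apply] at this
    calc σ x = τ (τ.symm (σ x)) := (τ.apply_symm_apply _).symm
    _ = τ x := by rw [this]
  · intro p hp
    rw [Finset.mem_filter] at hp
    have hne : p.1 ≠ p.2 := hp.2
    refine ⟨Equiv.ofBijective _ (aff_bij p.1 p.2 hne), ?_, ?_⟩
    · simp only [Finset.mem_filter, Finset.mem_univ, true_and]
      intro t ht
      exact aff_pres p.1 p.2 hne t ht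
    · have := aff_vals p.1 p.2
      exact Prod.ext this.1 this.2
end
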